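/- Let R and B be disjoint finite sets of red and blue points in the plane with R ∪ B in general position, |B| ≥ 1, and |R| = k|B| + 1 for an integer k ≥ 2. Suppose r₁, r, r₂ are red points that are consecutive in counter-clockwise order among the vertices of the convex hull of R ∪ B. Then at least one of the following holds. (1) There exist a blue point b ∈ B and an integer α with 0 < α < k such that |R₁| = k(|B₁|−1) + k − α and |R₂| = k(|B₂|−1) + α, where R₁ (resp. B₁) is the set of points of R − {r} (resp. B) lying on the line ℓ(r, b) or strictly on the side of ℓ(r, b) containing r₁, and R₂ (resp. B₂) is the set of points of R − {r} (resp. B) lying on ℓ(r, b) or strictly on the side of ℓ(r, b) containing r₂. (2) There exist blue points b, b' ∈ B that are consecutive in the radial ordering of (R ∪ B) − {r} around r (i.e., no point of (R ∪ B) − {r} lies strictly inside the angular wedge at r between the rays from r through b and through b'), with b preceding b' in the clockwise radial order starting at r₁, such that |R₁| = k|B₁| and |R₂| = k|B₂|, where R₁ (resp. B₁) is the set of points of R − {r} (resp. B) lying on ℓ(r, b) or strictly on the side of ℓ(r, b) containing r₁, and R₂ (resp. B₂) is the set of points of R − {r} (resp. B) lying on ℓ(r, b') or strictly on the side of ℓ(r,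 b') containing r₂. -/

import Mathlib

open scoped Classical

noncomputable section

/-- The plane. -/
abbrev Pt : Type := ℝ × ℝ

/-- A set of points is in general position if no three of its points are collinear. -/
def GenPos (P : Set Pt) : Prop :=
  ∀ p ∈ P, ∀ q ∈ P, ∀ r ∈ P, p ≠ q → p ≠ r → q ≠ r →
    ¬ Collinear ℝ ({p, q, r} : Set Pt)

/-- The planar cross product of two vectors. -/
def cross (u v : Pt) : ℝ := u.1 * v.2 - u.2 * v.1

/-- Signed orientation of the triple `(p, q, x)`: positive iff `x` lies strictly to
the left of the directed line from `p` to `q`, zero iff the three points are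
collinear. -/
def sgn3 (p q x : Pt) : ℝ := cross (q - p) (x - p)

/-- `[p, q]` is an edge of the convex hull of `P`, directed so that all of `P` lies
on the left of (or on) the directed line from `p` to `q`; successive such edges list
the hull vertices in counter-clockwise order. -/
def IsCCWHullEdge (P : Set Pt) (p q : Pt) : Prop :=
  p ∈ P ∧ q ∈ P ∧ p ≠ q ∧ ∀ x ∈ P, 0 ≤ sgn3 p q x

/-!
Sweep the line `ℓ(r, b)` around `r` from `r₁` to `r₂` through the blue points `b`, and let `ρ(b)`
and `β(b)` count the red points of `R − {r}` and the blue points on `ℓ(r, b)` or on its `r₁`-side.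
These closed half-planes are nested, so `β` takes the values `1, …, |B|` in sweep order and `ρ`
grows weakly. The deficit `kβ(b) − ρ(b)` is below `k` at the first blue point (`r₁` is counted),
positive at the last one (`r₂` is not), and grows by at most `k` from one blue point to the next.
Hence either some deficit lies strictly between `0` and `k`, which is (1), or it jumps from `0`
to exactly `k` between consecutive blue points `b, b'`; then no red point lies between them,
which is (2).
-/

open Finset

lemma sgn3_cyclic (p q x : Pt) : sgn3 p q x = sgn3 q x p := by
  simp only [sgn3, cross, Prod.fst_sub, Prod.snd_sub]; ring

lemma sgn3_swap (p q x : Pt) : sgn3 p x q = -sgn3 p q x := by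
  simp only [sgn3, cross, Prod.fst_sub, Prod.snd_sub]; ring

@[simp]
lemma sgn3_self_right (p q : Pt) : sgn3 p q q = 0 := by
  simp only [sgn3, cross]; ring

lemma collinear_of_sgn3_eq_zero {p q x : Pt} (h : sgn3 p q x = 0) :
    Collinear ℝ ({p, q, x} : Set Pt) := by
  rcases eq_or_ne p q with rfl | hpq
  · simpa using collinear_pair ℝ p x
  have hD : (q.1 - p.1) ^ 2 + (q.2 - p.2) ^ 2 ≠ 0 := by
    intro hD
    exact hpq (Prod.ext (by nlinarith [sq_nonneg (q.1 - p.1), sq_nonneg (q.2 - p.2)])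
      (by nlinarith [sq_nonneg (q.1 - p.1), sq_nonneg (q.2 - p.2)]))
  have hx : x = AffineMap.lineMap p q
      (((x.1 - p.1) * (q.1 - p.1) + (x.2 - p.2) * (q.2 - p.2)) /
        ((q.1 - p.1) ^ 2 + (q.2 - p.2) ^ 2)) := by
    simp only [sgn3, cross, Prod.fst_sub, Prod.snd_sub] at h
    rw [AffineMap.lineMap_apply]
    ext <;> simp only [Prod.fst_add, Prod.snd_add, Prod.smul_fst, Prod.smul_snd, Prod.fst_sub,
      Prod.snd_sub, vsub_eq_sub, vadd_eq_add, smul_eq_mul] <;> field_simp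
    · linear_combination -(q.2 - p.2) * h
    · linear_combination (q.1 - p.1) * h
  have hperm : ({p, q, x} : Set Pt) = {x, p, q} := by
    rw [Set.insert_comm x, Set.pair_comm x]
  rw [hperm, hx]
  exact collinear_insert_of_mem_affineSpan_pair (AffineMap.lineMap_mem_affineSpan_pair _ _ _)

lemma GenPos.sgn3_ne_zero {P : Set Pt} (hP : GenPos P) {p q x : Pt} (hp : p ∈ P) (hq : q ∈ P)
    (hx : x ∈ P) (hpq : p ≠ q) (hpx : p ≠ x) (hqx : q ≠ x) : sgn3 p q x ≠ 0 :=
  fun h => hP p hp q hq x hx hpq hpx hqx (collinear_of_sgn3_eq_zero h)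

-- Within the half-plane left of `p → q`, "left of" is transitive, by a Plücker identity.
lemma sgn3_nonneg_trans {p q a b x : Pt} (ha : 0 < sgn3 p q a) (hb : 0 ≤ sgn3 p q b)
    (hx : 0 ≤ sgn3 p q x) (hba : 0 ≤ sgn3 p b a) (hax : 0 ≤ sgn3 p a x) : 0 ≤ sgn3 p b x := by
  have key : sgn3 p q a * sgn3 p b x = sgn3 p q x * sgn3 p b a + sgn3 p q b * sgn3 p a x := by
    simp only [sgn3, cross, Prod.fst_sub, Prod.snd_sub]; ring
  have : 0 ≤ sgn3 p q a * sgn3 p b x := key ▸ by positivity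
  exact nonneg_of_mul_nonneg_right this ha

theorem Finset.card_filter_le_add_card_filter_ge {α β : Type*} [LinearOrder β] (s : Finset α)
    (f : α → β) (a : β) :
    #(s.filter (a ≤ f ·)) + #(s.filter (f · ≤ a)) = #s + #(s.filter (f · = a)) := by
  rw [← card_union_add_card_inter, ← filter_or, ← filter_and,
    filter_true_of_mem fun x _ => le_total a (f x)]
  congr 2
  ext x
  simp only [mem_filter, le_antisymm_iff, and_comm]

-- What the counting argument uses about a hull vertex `r` and its hull neighbours `r₁, r₂`.
structure HullCorner (R B : Finset Pt) (r r₁ r₂ : Pt) : Prop where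
  disjoint : Disjoint R B
  mem : r ∈ R
  r₁_mem : r₁ ∈ R.erase r
  r₂_mem : r₂ ∈ R.erase r
  sgn3_r₁_pos : ∀ b ∈ B, 0 < sgn3 r b r₁
  sgn3_r₂_pos : ∀ b ∈ B, 0 < sgn3 r r₂ b
  sgn3_r₂_nonneg : ∀ x ∈ R ∪ B, 0 ≤ sgn3 r r₂ x
  sgn3_ne_zero : ∀ b ∈ B, ∀ x ∈ R ∪ B, x ≠ r → x ≠ b → sgn3 r b x ≠ 0

def leftOf (r b : Pt) (s : Finset Pt) : Finset Pt := s.filter (0 ≤ sgn3 r b ·)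

def rightOf (r b : Pt) (s : Finset Pt) : Finset Pt := s.filter (sgn3 r b · ≤ 0)

@[simp]
lemma mem_leftOf {r b x : Pt} {s : Finset Pt} : x ∈ leftOf r b s ↔ x ∈ s ∧ 0 ≤ sgn3 r b x :=
  mem_filter

namespace HullCorner

variable {R B : Finset Pt} {r r₁ r₂ b b' : Pt}

theorem of_isCCWHullEdge (hdisj : Disjoint R B) (hgp : GenPos (↑(R ∪ B) : Set Pt))
    (hr₁ : r₁ ∈ R) (hr : r ∈ R) (hr₂ : r₂ ∈ R)
    (hedge₁ : IsCCWHullEdge (↑(R ∪ B) : Set Pt) r₁ r)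
    (hedge₂ : IsCCWHullEdge (↑(R ∪ B) : Set Pt) r r₂) : HullCorner R B r r₁ r₂ := by
  obtain ⟨-, -, hr₁r, hleft₁⟩ := hedge₁
  obtain ⟨-, -, hrr₂, hleft₂⟩ := hedge₂
  have hne : ∀ {x y}, x ∈ R → y ∈ B → x ≠ y := fun hx hy => ne_of_mem_of_not_mem hx
    (disjoint_right.mp hdisj hy)
  have hmem : ∀ {x}, x ∈ R ∪ B → x ∈ (↑(R ∪ B) : Set Pt) := mem_coe.mpr
  refine ⟨hdisj, hr, mem_erase.mpr ⟨hr₁r, hr₁⟩, mem_erase.mpr ⟨hrr₂.symm, hr₂⟩, fun b hb => ?_,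
    fun b hb => ?_, fun x hx => hleft₂ x (hmem hx), fun b hb x hx hxr hxb => ?_⟩
  · rw [← sgn3_cyclic]
    exact (hleft₁ b (hmem (mem_union_right _ hb))).lt_of_ne' (hgp.sgn3_ne_zero
      (hmem (mem_union_left _ hr₁)) (hmem (mem_union_left _ hr)) (hmem (mem_union_right _ hb))
      hr₁r (hne hr₁ hb) (hne hr hb))
  · exact (hleft₂ b (hmem (mem_union_right _ hb))).lt_of_ne' (hgp.sgn3_ne_zero
      (hmem (mem_union_left _ hr)) (hmem (mem_union_left _ hr₂)) (hmem (mem_union_right _ hb))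
      hrr₂ (hne hr hb) (hne hr₂ hb))
  · exact hgp.sgn3_ne_zero (hmem (mem_union_left _ hr)) (hmem (mem_union_right _ hb)) (hmem hx)
      (hne hr hb) (Ne.symm hxr) (Ne.symm hxb)

theorem mul_sgn3_r₁_nonneg_iff (hc : HullCorner R B r r₁ r₂) (hb : b ∈ B) (x : Pt) :
    0 ≤ sgn3 r b x * sgn3 r b r₁ ↔ 0 ≤ sgn3 r b x :=
  mul_nonneg_iff_of_pos_right (hc.sgn3_r₁_pos b hb)

theorem mul_sgn3_r₂_nonneg_iff (hc : HullCorner R B r r₁ r₂) (hb : b ∈ B) (x : Pt) :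
    0 ≤ sgn3 r b x * sgn3 r b r₂ ↔ sgn3 r b x ≤ 0 := by
  rw [sgn3_swap r r₂ b, mul_neg, ← neg_mul, mul_nonneg_iff_of_pos_right (hc.sgn3_r₂_pos b hb),
    neg_nonneg]

theorem filter_mul_sgn3_r₁ (hc : HullCorner R B r r₁ r₂) (hb : b ∈ B) (s : Finset Pt) :
    s.filter (fun x => 0 ≤ sgn3 r b x * sgn3 r b r₁) = leftOf r b s :=
  filter_congr fun x _ => hc.mul_sgn3_r₁_nonneg_iff hb x

theorem filter_mul_sgn3_r₂ (hc : HullCorner R B r r₁ r₂) (hb : b ∈ B) (s : Finset Pt) :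
    s.filter (fun x => 0 ≤ sgn3 r b x * sgn3 r b r₂) = rightOf r b s :=
  filter_congr fun x _ => hc.mul_sgn3_r₂_nonneg_iff hb x

theorem card_leftOf_add_card_rightOf_erase (hc : HullCorner R B r r₁ r₂) (hb : b ∈ B) :
    #(leftOf r b (R.erase r)) + #(rightOf r b (R.erase r)) = #(R.erase r) := by
  have hline : (R.erase r).filter (sgn3 r b · = 0) = ∅ := filter_eq_empty_iff.mpr fun x hx =>
    have ⟨hxr, hxR⟩ := mem_erase.mp hx
    hc.sgn3_ne_zero b hb x (mem_union_left _ hxR) hxr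
      (ne_of_mem_of_not_mem hxR (disjoint_right.mp hc.disjoint hb))
  simpa [hline, leftOf, rightOf] using card_filter_le_add_card_filter_ge (R.erase r) (sgn3 r b) 0

theorem card_leftOf_add_card_rightOf_blue (hc : HullCorner R B r r₁ r₂) (hb : b ∈ B) :
    #(leftOf r b B) + #(rightOf r b B) = #B + 1 := by
  have hline : B.filter (sgn3 r b · = 0) = {b} := by
    refine eq_singleton_iff_unique_mem.mpr ⟨mem_filter.mpr ⟨hb, sgn3_self_right r b⟩, ?_⟩
    intro x hx
    obtain ⟨hxB, hx0⟩ := mem_filter.mp hx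
    by_contra hxb
    exact hc.sgn3_ne_zero b hb x (mem_union_right _ hxB)
      (ne_of_mem_of_not_mem hxB (disjoint_left.mp hc.disjoint hc.mem)) hxb hx0
  simpa [hline, leftOf, rightOf] using card_filter_le_add_card_filter_ge B (sgn3 r b) 0

theorem leftOf_subset_leftOf (hc : HullCorner R B r r₁ r₂) (hb : b ∈ B) (hb' : b' ∈ B)
    (h : 0 ≤ sgn3 r b' b) {s : Finset Pt} (hs : s ⊆ R ∪ B) : leftOf r b s ⊆ leftOf r b' s := by
  intro x hx
  obtain ⟨hxs, hbx⟩ := mem_leftOf.mp hx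
  exact mem_leftOf.mpr ⟨hxs, sgn3_nonneg_trans (hc.sgn3_r₂_pos b hb) (hc.sgn3_r₂_pos b' hb').le
    (hc.sgn3_r₂_nonneg x (hs hxs)) h hbx⟩

theorem ne_of_mem_blue (hc : HullCorner R B r r₁ r₂) (hb : b ∈ B) : b ≠ r :=
  ne_of_mem_of_not_mem hb (disjoint_left.mp hc.disjoint hc.mem)

theorem sgn3_pos_of_nonneg (hc : HullCorner R B r r₁ r₂) (hb : b ∈ B) (hb' : b' ∈ B)
    (hne : b' ≠ b) (h : 0 ≤ sgn3 r b b') : 0 < sgn3 r b b' :=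
  h.lt_of_ne' (hc.sgn3_ne_zero b hb b' (mem_union_right _ hb') (hc.ne_of_mem_blue hb') hne)

theorem card_leftOf_lt_card_leftOf (hc : HullCorner R B r r₁ r₂) (hb : b ∈ B) (hb' : b' ∈ B)
    (hne : b' ≠ b) (h : 0 ≤ sgn3 r b b') : #(leftOf r b' B) < #(leftOf r b B) := by
  refine card_lt_card ((ssubset_iff_of_subset
    (hc.leftOf_subset_leftOf hb' hb h subset_union_right)).mpr ⟨b, ?_, ?_⟩)
  · exact mem_leftOf.mpr ⟨hb, (sgn3_self_right r b).ge⟩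
  · rw [mem_leftOf, sgn3_swap, neg_nonneg, not_and, not_le]
    exact fun _ => hc.sgn3_pos_of_nonneg hb hb' hne h

theorem exists_card_leftOf_eq_one (hc : HullCorner R B r r₁ r₂) (hB : B.Nonempty) :
    ∃ b ∈ B, #(leftOf r b B) = 1 := by
  obtain ⟨b, hb, hmin⟩ := exists_min_image B (fun c => #(leftOf r c B)) hB
  refine ⟨b, hb, card_eq_one.mpr ⟨b, eq_singleton_iff_unique_mem.mpr
    ⟨mem_leftOf.mpr ⟨hb, (sgn3_self_right r b).ge⟩, fun x hx => ?_⟩⟩⟩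
  obtain ⟨hxB, hbx⟩ := mem_leftOf.mp hx
  by_contra hxb
  exact (hc.card_leftOf_lt_card_leftOf hb hxB hxb hbx).not_ge (hmin x hxB)

theorem exists_next_blue (hc : HullCorner R B r r₁ r₂) (hb : b ∈ B) (hlt : #(leftOf r b B) < #B) :
    ∃ b' ∈ B, sgn3 r b b' < 0 ∧ leftOf r b' B = insert b' (leftOf r b B) := by
  have hright : (B.filter (sgn3 r b · < 0)).Nonempty := by
    by_contra hempty
    rw [not_nonempty_iff_eq_empty, filter_eq_empty_iff] at hempty
    exact hlt.not_ge (card_le_card fun x hx => mem_leftOf.mpr ⟨hx, not_lt.mp (hempty hx)⟩)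
  obtain ⟨b', hb'right, hmin⟩ := exists_min_image _ (fun c => #(leftOf r c B)) hright
  obtain ⟨hb', hbb'⟩ := mem_filter.mp hb'right
  refine ⟨b', hb', hbb', Subset.antisymm (fun x hx => ?_) (insert_subset_iff.mpr
    ⟨mem_leftOf.mpr ⟨hb', (sgn3_self_right r b').ge⟩, hc.leftOf_subset_leftOf hb hb'
      (by rw [sgn3_swap]; linarith) subset_union_right⟩)⟩
  obtain ⟨hxB, hb'x⟩ := mem_leftOf.mp hx
  rw [mem_insert, mem_leftOf]
  by_contra! hout
  exact (hc.card_leftOf_lt_card_leftOf hb' hxB hout.1 hb'x).not_ge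
    (hmin x (mem_filter.mpr ⟨hxB, hout.2 hxB⟩))

theorem card_leftOf_erase_lt (hc : HullCorner R B r r₁ r₂) (hb : b ∈ B) :
    #(leftOf r b (R.erase r)) < #(R.erase r) :=
  card_lt_card (filter_ssubset.mpr ⟨r₂, hc.r₂_mem, by
    rw [sgn3_swap, neg_nonneg, not_le]; exact hc.sgn3_r₂_pos b hb⟩)

theorem exists_small_deficit_or_balanced_pair (hc : HullCorner R B r r₁ r₂) {k : ℕ}
    (hk : #(R.erase r) = k * #B) (hB : B.Nonempty) :
    (∃ b ∈ B, #(leftOf r b (R.erase r)) < k * #(leftOf r b B) ∧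
        k * #(leftOf r b B) < #(leftOf r b (R.erase r)) + k) ∨
    (∃ b ∈ B, ∃ b' ∈ B, sgn3 r b b' < 0 ∧ leftOf r b' B = insert b' (leftOf r b B) ∧
        leftOf r b' (R.erase r) = leftOf r b (R.erase r) ∧
        #(leftOf r b (R.erase r)) = k * #(leftOf r b B)) := by
  by_cases hbal : ∃ b ∈ B, k * #(leftOf r b B) ≤ #(leftOf r b (R.erase r))
  swap
  · simp only [not_exists, not_and, not_le] at hbal
    obtain ⟨b, hb, hone⟩ := hc.exists_card_leftOf_eq_one hB
    have hr₁ : 0 < #(leftOf r b (R.erase r)) :=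
      card_pos.mpr ⟨r₁, mem_leftOf.mpr ⟨hc.r₁_mem, (hc.sgn3_r₁_pos b hb).le⟩⟩
    exact Or.inl ⟨b, hb, hbal b hb, by rw [hone]; omega⟩
  obtain ⟨b, hbal_b, hmax⟩ := exists_max_image
    (B.filter fun b => k * #(leftOf r b B) ≤ #(leftOf r b (R.erase r)))
    (fun b => #(leftOf r b B)) (by simpa [Finset.Nonempty] using hbal)
  obtain ⟨hb, hkb⟩ := mem_filter.mp hbal_b
  have hred : #(leftOf r b (R.erase r)) < k * #B := hk ▸ hc.card_leftOf_erase_lt hb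
  obtain ⟨b', hb', hbb', hnext⟩ :=
    hc.exists_next_blue hb (Nat.lt_of_mul_lt_mul_left (hkb.trans_lt hred))
  have hcard' : #(leftOf r b' B) = #(leftOf r b B) + 1 := by
    rw [hnext, card_insert_of_notMem fun h => hbb'.not_ge (mem_leftOf.mp h).2]
  have hsub : leftOf r b (R.erase r) ⊆ leftOf r b' (R.erase r) :=
    hc.leftOf_subset_leftOf hb hb' (by rw [sgn3_swap]; linarith)
      (erase_subset _ _ |>.trans subset_union_left)
  have hlo : #(leftOf r b' (R.erase r)) < k * #(leftOf r b' B) := by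
    by_contra! h
    have := hmax b' (mem_filter.mpr ⟨hb', h⟩)
    omega
  by_cases hhi : k * #(leftOf r b' B) < #(leftOf r b' (R.erase r)) + k
  · exact Or.inl ⟨b', hb', hlo, hhi⟩
  -- the deficit jumps from `b` to `b'` by at most `k`, hence by exactly `k`: no red point is added
  have hle := card_le_card hsub
  rw [hcard', mul_add_one] at hhi
  have heq : #(leftOf r b' (R.erase r)) = #(leftOf r b (R.erase r)) := by omega
  exact Or.inr ⟨b, hb, b', hb', hbb', hnext, (eq_of_subset_of_card_le hsub heq.le).symm, by omega⟩

theorem exists_alpha_of_small_deficit (hc : HullCorner R B r r₁ r₂) {k : ℕ}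
    (hk : #(R.erase r) = k * #B) (hb : b ∈ B)
    (hlo : #(leftOf r b (R.erase r)) < k * #(leftOf r b B))
    (hhi : k * #(leftOf r b B) < #(leftOf r b (R.erase r)) + k) :
    ∃ α : ℕ, 0 < α ∧ α < k ∧
      (((R.erase r).filter (fun x => 0 ≤ sgn3 r b x * sgn3 r b r₁)).card : ℤ)
        = k * (((B.filter (fun x => 0 ≤ sgn3 r b x * sgn3 r b r₁)).card : ℤ) - 1) + k - α ∧
      (((R.erase r).filter (fun x => 0 ≤ sgn3 r b x * sgn3 r b r₂)).card : ℤ)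
        = k * (((B.filter (fun x => 0 ≤ sgn3 r b x * sgn3 r b r₂)).card : ℤ) - 1) + α := by
  simp only [hc.filter_mul_sgn3_r₁ hb, hc.filter_mul_sgn3_r₂ hb]
  have hred : (#(leftOf r b (R.erase r)) : ℤ) + #(rightOf r b (R.erase r)) = k * #B := by
    exact_mod_cast (hc.card_leftOf_add_card_rightOf_erase hb).trans hk
  have hblue : (#(leftOf r b B) : ℤ) + #(rightOf r b B) = #B + 1 := by
    exact_mod_cast hc.card_leftOf_add_card_rightOf_blue hb
  refine ⟨k * #(leftOf r b B) - #(leftOf r b (R.erase r)), by omega, by omega, ?_, ?_⟩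
  · push_cast [Nat.cast_sub hlo.le]
    ring
  · push_cast [Nat.cast_sub hlo.le]
    linear_combination hred - (k : ℤ) * hblue

theorem consecutive_of_balanced_pair (hc : HullCorner R B r r₁ r₂) {k : ℕ}
    (hk : #(R.erase r) = k * #B) (hb : b ∈ B) (hb' : b' ∈ B) (hbb' : sgn3 r b b' < 0)
    (hnext : leftOf r b' B = insert b' (leftOf r b B))
    (hred : leftOf r b' (R.erase r) = leftOf r b (R.erase r))
    (hbal : #(leftOf r b (R.erase r)) = k * #(leftOf r b B)) :
    b ≠ b' ∧
      sgn3 r b b' * sgn3 r b r₁ ≤ 0 ∧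
      sgn3 r b' b * sgn3 r b' r₂ ≤ 0 ∧
      (∀ x ∈ R ∪ B, x ≠ r →
        ¬ (sgn3 r b x * sgn3 r b r₁ < 0 ∧ sgn3 r b' x * sgn3 r b' r₂ < 0)) ∧
      ((R.erase r).filter (fun x => 0 ≤ sgn3 r b x * sgn3 r b r₁)).card
        = k * (B.filter (fun x => 0 ≤ sgn3 r b x * sgn3 r b r₁)).card ∧
      ((R.erase r).filter (fun x => 0 ≤ sgn3 r b' x * sgn3 r b' r₂)).card
        = k * (B.filter (fun x => 0 ≤ sgn3 r b' x * sgn3 r b' r₂)).card := by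
  have hb'b : 0 < sgn3 r b' b := by rw [sgn3_swap]; linarith
  have hb'r₂ : sgn3 r b' r₂ < 0 := by rw [sgn3_swap]; linarith [hc.sgn3_r₂_pos b' hb']
  refine ⟨fun h => by simp [h] at hbb', mul_nonpos_of_nonpos_of_nonneg hbb'.le
    (hc.sgn3_r₁_pos b hb).le, mul_nonpos_of_nonneg_of_nonpos hb'b.le hb'r₂.le, ?_, ?_, ?_⟩
  · rintro x hx hxr ⟨hbx, hb'x⟩
    rw [← not_le, hc.mul_sgn3_r₁_nonneg_iff hb] at hbx
    rw [← not_le, hc.mul_sgn3_r₂_nonneg_iff hb', not_le] at hb'x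
    rcases mem_union.mp hx with hxR | hxB
    · have : x ∈ leftOf r b' (R.erase r) := mem_leftOf.mpr ⟨mem_erase.mpr ⟨hxr, hxR⟩, hb'x.le⟩
      exact hbx (mem_leftOf.mp (hred ▸ this)).2
    · have : x ∈ leftOf r b' B := mem_leftOf.mpr ⟨hxB, hb'x.le⟩
      rcases mem_insert.mp (hnext ▸ this) with rfl | hxleft
      · simp at hb'x
      · exact hbx (mem_leftOf.mp hxleft).2
  · rwa [hc.filter_mul_sgn3_r₁ hb, hc.filter_mul_sgn3_r₁ hb]
  · rw [hc.filter_mul_sgn3_r₂ hb', hc.filter_mul_sgn3_r₂ hb']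
    have hred' := hc.card_leftOf_add_card_rightOf_erase hb'
    have hblue' := hc.card_leftOf_add_card_rightOf_blue hb'
    rw [hred, hk, hbal] at hred'
    rw [hnext, card_insert_of_notMem fun h => hbb'.not_ge (mem_leftOf.mp h).2, add_right_comm,
      add_left_inj] at hblue'
    rw [← hblue', mul_add] at hred'
    omega

end HullCorner

theorem statement_13_general (R B : Finset Pt) (hdisj : Disjoint R B)
    (hgp : GenPos (↑(R ∪ B) : Set Pt)) (k : ℕ) (hB : 1 ≤ B.card)
    (hcard : R.card = k * B.card + 1)
    (r₁ r r₂ : Pt) (hr₁ : r₁ ∈ R) (hr : r ∈ R) (hr₂ : r₂ ∈ R)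
    (hedge₁ : IsCCWHullEdge (↑(R ∪ B) : Set Pt) r₁ r)
    (hedge₂ : IsCCWHullEdge (↑(R ∪ B) : Set Pt) r r₂) :
    (∃ b ∈ B, ∃ α : ℕ, 0 < α ∧ α < k ∧
      (((R.erase r).filter (fun x => 0 ≤ sgn3 r b x * sgn3 r b r₁)).card : ℤ)
        = k * (((B.filter (fun x => 0 ≤ sgn3 r b x * sgn3 r b r₁)).card : ℤ) - 1)
            + k - α ∧
      (((R.erase r).filter (fun x => 0 ≤ sgn3 r b x * sgn3 r b r₂)).card : ℤ)
        = k * (((B.filter (fun x => 0 ≤ sgn3 r b x * sgn3 r b r₂)).card : ℤ) - 1)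
            + α) ∨
    (∃ b ∈ B, ∃ b' ∈ B, b ≠ b' ∧
      -- `b` weakly precedes `b'` in the clockwise radial order around `r` from `r₁`:
      sgn3 r b b' * sgn3 r b r₁ ≤ 0 ∧
      sgn3 r b' b * sgn3 r b' r₂ ≤ 0 ∧
      -- `b` and `b'` are radially consecutive around `r`:
      (∀ x ∈ R ∪ B, x ≠ r →
        ¬ (sgn3 r b x * sgn3 r b r₁ < 0 ∧ sgn3 r b' x * sgn3 r b' r₂ < 0)) ∧
      ((R.erase r).filter (fun x => 0 ≤ sgn3 r b x * sgn3 r b r₁)).card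
        = k * (B.filter (fun x => 0 ≤ sgn3 r b x * sgn3 r b r₁)).card ∧
      ((R.erase r).filter (fun x => 0 ≤ sgn3 r b' x * sgn3 r b' r₂)).card
        = k * (B.filter (fun x => 0 ≤ sgn3 r b' x * sgn3 r b' r₂)).card) := by
  have hc := HullCorner.of_isCCWHullEdge hdisj hgp hr₁ hr hr₂ hedge₁ hedge₂
  have hkR : #(R.erase r) = k * #B := by rw [card_erase_of_mem hr, hcard, Nat.add_sub_cancel]
  rcases hc.exists_small_deficit_or_balanced_pair hkR (card_pos.mp hB) with
    ⟨b, hb, hlo, hhi⟩ | ⟨b, hb, b', hb', hbb', hnext, hred, hbal⟩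
  · exact Or.inl ⟨b, hb, hc.exists_alpha_of_small_deficit hkR hb hlo hhi⟩
  · exact Or.inr ⟨b, hb, b', hb', hc.consecutive_of_balanced_pair hkR hb hb' hbb' hnext hred hbal⟩

/-- Lemma on three consecutive red hull points.
Let `|R| = k|B| + 1`, `k ≥ 2`, `|B| ≥ 1`, and let `r₁, r, r₂` be red points
consecutive in counter-clockwise order on the convex hull of `R ∪ B`. Then either:
(1) there is a blue point `b` and `0 < α < k` with `|R₁| = k(|B₁|-1) + k - α` and
`|R₂| = k(|B₂|-1) + α`, where `R₁, B₁` (resp. `R₂, B₂`) are the points of `R \ {r}`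
(resp. `B`) on the line `ℓ(r,b)` or strictly on its side containing `r₁` (resp. `r₂`);
or (2) there are distinct blue points `b, b'`, consecutive in the radial ordering
around `r` (no point of `(R ∪ B) \ {r}` lies strictly inside the angular wedge at `r`
between the rays `r→b` and `r→b'`), with `b` preceding `b'` clockwise from `r₁`, such
that `|R₁| = k|B₁|` and `|R₂| = k|B₂|`, where `R₁, B₁` are the points of `R \ {r}`,
`B` on `ℓ(r,b)` or strictly on its `r₁`-side and `R₂, B₂` those on `ℓ(r,b')` or
strictly on its `r₂`-side. -/
theorem statement_13 (R B : Finset Pt) (hdisj : Disjoint R B)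
    (hgp : GenPos (↑(R ∪ B) : Set Pt)) (k : ℕ) (hk : 2 ≤ k) (hB : 1 ≤ B.card)
    (hcard : R.card = k * B.card + 1)
    (r₁ r r₂ : Pt) (hr₁ : r₁ ∈ R) (hr : r ∈ R) (hr₂ : r₂ ∈ R)
    (hedge₁ : IsCCWHullEdge (↑(R ∪ B) : Set Pt) r₁ r)
    (hedge₂ : IsCCWHullEdge (↑(R ∪ B) : Set Pt) r r₂) :
    (∃ b ∈ B, ∃ α : ℕ, 0 < α ∧ α < k ∧
      (((R.erase r).filter (fun x => 0 ≤ sgn3 r b x * sgn3 r b r₁)).card : ℤ)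
        = k * (((B.filter (fun x => 0 ≤ sgn3 r b x * sgn3 r b r₁)).card : ℤ) - 1)
            + k - α ∧
      (((R.erase r).filter (fun x => 0 ≤ sgn3 r b x * sgn3 r b r₂)).card : ℤ)
        = k * (((B.filter (fun x => 0 ≤ sgn3 r b x * sgn3 r b r₂)).card : ℤ) - 1)
            + α) ∨
    (∃ b ∈ B, ∃ b' ∈ B, b ≠ b' ∧
      -- `b` weakly precedes `b'` in the clockwise radial order around `r` from `r₁`:
      sgn3 r b b' * sgn3 r b r₁ ≤ 0 ∧
      sgn3 r b' b * sgn3 r b' r₂ ≤ 0 ∧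
      -- `b` and `b'` are radially consecutive around `r`:
      (∀ x ∈ R ∪ B, x ≠ r →
        ¬ (sgn3 r b x * sgn3 r b r₁ < 0 ∧ sgn3 r b' x * sgn3 r b' r₂ < 0)) ∧
      ((R.erase r).filter (fun x => 0 ≤ sgn3 r b x * sgn3 r b r₁)).card
        = k * (B.filter (fun x => 0 ≤ sgn3 r b x * sgn3 r b r₁)).card ∧
      ((R.erase r).filter (fun x => 0 ≤ sgn3 r b' x * sgn3 r b' r₂)).card
        = k * (B.filter (fun x => 0 ≤ sgn3 r b' x * sgn3 r b' r₂)).card) :=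
  statement_13_general R B hdisj hgp k hB hcard r₁ r r₂ hr₁ hr hr₂ hedge₁ hedge₂
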